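/- arXiv:2210.03648 — 6 statements merged into one kernel-verified Lean document; each statement's English description precedes it below -/
import Mathlib

section
/- If H is a subgyrogroup of a topological gyrogroup G, then the closure of H in G is a subgyrogroup of G. -/
universe u

/-- A gyrogroup: a groupoid with identity, inverses, gyroautomorphisms satisfying the
left gyroassociative law and the left loop property. -/
class Gyrogroup (G : Type u) where
  add : G → G → G
  zero : G
  neg : G → G
  gyr : G → G → G → G
  zero_add : ∀ x, add zero x = x
  add_zero : ∀ x, add x zero = x
  neg_add : ∀ x, add (neg x) x = zero
  add_neg : ∀ x, add x (neg x) = zero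
  gyr_bijective : ∀ a b, Function.Bijective (gyr a b)
  gyr_add : ∀ a b x y, gyr a b (add x y) = add (gyr a b x) (gyr a b y)
  gyrassoc : ∀ a b z, add a (add b z) = add (add a b) (gyr a b z)
  loop : ∀ a b, gyr (add a b) b = gyr a b

/-- A topological gyrogroup: the operation is jointly continuous and inversion is continuous. -/
class TopologicalGyrogroup (G : Type u) [TopologicalSpace G] [Gyrogroup G] : Prop where
  continuous_add : Continuous fun p : G × G => Gyrogroup.add p.1 p.2
  continuous_neg : Continuous (Gyrogroup.neg : G → G)

/-- `H` is a subgyrogroup of `G` (by the subgyrogroup criterion: nonempty and closed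
under the operation and inversion; this is equivalent to `(H, ⊕|H)` being itself a
gyrogroup whose gyroautomorphisms are the restrictions of those of `G`). -/
structure IsSubgyrogroup {G : Type u} [Gyrogroup G] (H : Set G) : Prop where
  nonempty : H.Nonempty
  add_mem : ∀ ⦃a⦄, a ∈ H → ∀ ⦃b⦄, b ∈ H → Gyrogroup.add a b ∈ H
  neg_mem : ∀ ⦃a⦄, a ∈ H → Gyrogroup.neg a ∈ H

/-- An `L`-subgyrogroup: a subgyrogroup with `gyr[a,h](H) = H` for all `a ∈ G`, `h ∈ H`. -/
structure IsLSubgyrogroup {G : Type u} [Gyrogroup G] (H : Set G)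
    extends IsSubgyrogroup H : Prop where
  gyr_image : ∀ (a : G), ∀ ⦃h⦄, h ∈ H → Gyrogroup.gyr a h '' H = H

/-- A strongly `L`-subgyrogroup: a subgyrogroup with `gyr[a,b](H) ⊆ H` for all `a, b ∈ G`. -/
structure IsStronglyLSubgyrogroup {G : Type u} [Gyrogroup G] (H : Set G)
    extends IsSubgyrogroup H : Prop where
  gyr_image_subset : ∀ a b : G, Gyrogroup.gyr a b '' H ⊆ H

/-- The pointwise sum `A ⊕ B = {a ⊕ b : a ∈ A, b ∈ B}` of two subsets. -/
def setAdd {G : Type u} [Gyrogroup G] (A B : Set G) : Set G :=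
  Set.image2 Gyrogroup.add A B

/-- The left coset `a ⊕ H = {a ⊕ h : h ∈ H}`. -/
def lCoset {G : Type u} [Gyrogroup G] (H : Set G) (a : G) : Set G :=
  (fun h => Gyrogroup.add a h) '' H

/-- The setoid on `G` identifying points with the same left coset modulo `H`. -/
def cosetSetoid {G : Type u} [Gyrogroup G] (H : Set G) : Setoid G :=
  ⟨fun x y => lCoset H x = lCoset H y,
   ⟨fun _ => rfl, fun h => h.symm, fun h₁ h₂ => h₁.trans h₂⟩⟩

/-- The coset space `G/H`, carrying the quotient topology: a set `O ⊆ G/H` is open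
iff `π⁻¹(O)` is open in `G`. -/
abbrev GyroQuot {G : Type u} [Gyrogroup G] (H : Set G) : Type u :=
  Quotient (cosetSetoid H)

/-- The natural quotient map `π : G → G/H`, `a ↦ a ⊕ H`. -/
def qmap {G : Type u} [Gyrogroup G] (H : Set G) (a : G) : GyroQuot H :=
  Quotient.mk (cosetSetoid H) a

/-- The closure of a subgyrogroup of a topological gyrogroup is a subgyrogroup. -/
theorem stmt_3 {G : Type u} [Gyrogroup G] [TopologicalSpace G] [TopologicalGyrogroup G]
    (H : Set G) (hH : IsSubgyrogroup H) :
    IsSubgyrogroup (closure H) := by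
  refine ⟨hH.nonempty.mono subset_closure, ?_, ?_⟩
  · intro a ha b hb
    exact map_mem_closure₂ TopologicalGyrogroup.continuous_add ha hb hH.add_mem
  · intro a ha
    exact map_mem_closure TopologicalGyrogroup.continuous_neg ha hH.neg_mem
end

section
/- If H is an L-subgyrogroup of a topological gyrogroup G, then the closure of H in G is an L-subgyrogroup of G. -/
universe u

namespace GyroAux

open Gyrogroup

variable {G : Type u} [Gyrogroup G]

lemma left_cancel (a : G) {x y : G} (h : add a x = add a y) : x = y := by
  have h2 := congrArg (add (neg a)) h
  rw [gyrassoc, gyrassoc, Gyrogroup.neg_add, Gyrogroup.zero_add, Gyrogroup.zero_add] at h2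
  exact (gyr_bijective (neg a) a).1 h2

lemma gyr_zero_left (b z : G) : gyr (zero : G) b z = z := by
  have h := gyrassoc (zero : G) b z
  rw [Gyrogroup.zero_add, Gyrogroup.zero_add] at h
  exact (left_cancel b h.symm)

lemma gyr_neg_same (a z : G) : gyr (neg a) a z = z := by
  have h := loop (neg a) a
  rw [Gyrogroup.neg_add] at h
  rw [← h, gyr_zero_left]

lemma gyr_same_neg (a z : G) : gyr a (neg a) z = z := by
  have h := loop a (neg a)
  rw [Gyrogroup.add_neg] at h
  rw [← h, gyr_zero_left]

lemma neg_add_cancel_left (a x : G) : add (neg a) (add a x) = x := by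
  rw [gyrassoc, Gyrogroup.neg_add, Gyrogroup.zero_add, gyr_neg_same]

lemma add_neg_cancel_left (a x : G) : add a (add (neg a) x) = x := by
  rw [gyrassoc, Gyrogroup.add_neg, Gyrogroup.zero_add, gyr_same_neg]

lemma gyr_formula (a b z : G) :
    gyr a b z = add (neg (add a b)) (add a (add b z)) := by
  rw [gyrassoc a b z, neg_add_cancel_left]

/-- The inverse of `gyr a h` in closed form. -/
def invg (a h w : G) : G :=
  add (neg h) (add (neg a) (add (add a h) w))

lemma gyr_invg (a h w : G) : gyr a h (invg a h w) = w := by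
  apply left_cancel (add a h)
  rw [← gyrassoc, invg, add_neg_cancel_left, add_neg_cancel_left]

section Top

variable [TopologicalSpace G] [TopologicalGyrogroup G]

lemma cont_add {α : Type*} [TopologicalSpace α] {f g : α → G}
    (hf : Continuous f) (hg : Continuous g) :
    Continuous fun x => add (f x) (g x) :=
  TopologicalGyrogroup.continuous_add.comp (hf.prodMk hg)

lemma cont_neg {α : Type*} [TopologicalSpace α] {f : α → G}
    (hf : Continuous f) : Continuous fun x => neg (f x) :=
  TopologicalGyrogroup.continuous_neg.comp hf

lemma cont_gyr (a : G) : Continuous fun p : G × G => gyr a p.1 p.2 := by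
  have : (fun p : G × G => gyr a p.1 p.2)
      = fun p : G × G => add (neg (add a p.1)) (add a (add p.1 p.2)) :=
    funext fun p => gyr_formula a p.1 p.2
  rw [this]
  exact cont_add (cont_neg (cont_add continuous_const continuous_fst))
    (cont_add continuous_const (cont_add continuous_fst continuous_snd))

lemma cont_invg (a : G) : Continuous fun p : G × G => invg a p.1 p.2 := by
  unfold invg
  exact cont_add (cont_neg continuous_fst)
    (cont_add continuous_const
      (cont_add (cont_add continuous_const continuous_fst) continuous_snd))

end Top

end GyroAux

/-- The closure of an L-subgyrogroup of a topological gyrogroup is an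
L-subgyrogroup. -/
theorem stmt_4 {G : Type u} [Gyrogroup G] [TopologicalSpace G] [TopologicalGyrogroup G]
    (H : Set G) (hH : IsLSubgyrogroup H) :
    IsLSubgyrogroup (closure H) := by
  open Gyrogroup GyroAux in
  have hS := hH.toIsSubgyrogroup
  have hmem : ∀ (a : G), ∀ x ∈ H, ∀ y ∈ H, Gyrogroup.gyr a x y ∈ H := by
    intro a x hx y hy
    rw [← hH.gyr_image a hx]
    exact Set.mem_image_of_mem _ hy
  have hinv : ∀ (a : G), ∀ x ∈ H, ∀ y ∈ H, GyroAux.invg a x y ∈ H := by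
    intro a x hx y hy
    have hy' : y ∈ Gyrogroup.gyr a x '' H := by rw [hH.gyr_image a hx]; exact hy
    obtain ⟨z, hz, hzy⟩ := hy'
    have : GyroAux.invg a x y = z := by
      apply (Gyrogroup.gyr_bijective a x).1
      rw [GyroAux.gyr_invg, hzy]
    rwa [this]
  refine ⟨⟨hS.nonempty.mono subset_closure, ?_, ?_⟩, ?_⟩
  · intro x hx y hy
    exact map_mem_closure₂ TopologicalGyrogroup.continuous_add hx hy
      (fun p hp q hq => hS.add_mem hp hq)
  · intro x hx
    exact map_mem_closure TopologicalGyrogroup.continuous_neg hx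
      (fun p hp => hS.neg_mem hp)
  · intro a h hh
    apply subset_antisymm
    · rintro _ ⟨z, hz, rfl⟩
      exact map_mem_closure₂ (GyroAux.cont_gyr a) hh hz
        (fun p hp q hq => hmem a p hp q hq)
    · intro w hw
      refine ⟨GyroAux.invg a h w, ?_, GyroAux.gyr_invg a h w⟩
      exact map_mem_closure₂ (GyroAux.cont_invg a) hh hw
        (fun p hp q hq => hinv a p hp q hq)
end

section
/- Every open subgyrogroup H of a topological gyrogroup G is closed in G. -/
universe u

section Aux

open Gyrogroup

variable {G : Type u} [Gyrogroup G]

lemma gyr_eq_aux (a x : G) :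
    gyr (neg a) a x = add (neg a) (add a x) := by
  rw [gyrassoc (neg a) a x, Gyrogroup.neg_add, Gyrogroup.zero_add]

lemma gy_add_left_injective (a : G) : Function.Injective (add a) := by
  intro x y h
  have : gyr (neg a) a x = gyr (neg a) a y := by
    rw [gyr_eq_aux, gyr_eq_aux, h]
  exact (Gyrogroup.gyr_bijective (neg a) a).1 this

lemma gyr_zero_left (b z : G) : gyr zero b z = z := by
  apply gy_add_left_injective b
  have := gyrassoc (zero : G) b z
  rw [Gyrogroup.zero_add, Gyrogroup.zero_add] at this
  exact this.symm

lemma gyr_neg_self (a z : G) : gyr (neg a) a z = z := by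
  have h := loop (neg a) a
  rw [Gyrogroup.neg_add] at h
  rw [← h, gyr_zero_left]

lemma gyr_self_neg (a z : G) : gyr a (neg a) z = z := by
  have h := loop a (neg a)
  rw [Gyrogroup.add_neg] at h
  rw [← h, gyr_zero_left]

lemma gy_neg_add_cancel_left (a z : G) : add (neg a) (add a z) = z := by
  rw [gyrassoc, Gyrogroup.neg_add, Gyrogroup.zero_add, gyr_neg_self]

lemma gy_add_neg_cancel_left (a z : G) : add a (add (neg a) z) = z := by
  rw [gyrassoc, Gyrogroup.add_neg, Gyrogroup.zero_add, gyr_self_neg]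

end Aux

open Gyrogroup

/-- Every open subgyrogroup of a topological gyrogroup is closed. -/
theorem stmt_5 {G : Type u} [Gyrogroup G] [TopologicalSpace G] [TopologicalGyrogroup G]
    (H : Set G) (hH : IsSubgyrogroup H) (hopen : IsOpen H) :
    IsClosed H := by
  have zero_mem : (zero : G) ∈ H := by
    obtain ⟨a, ha⟩ := hH.nonempty
    have := hH.add_mem (hH.neg_mem ha) ha
    rwa [Gyrogroup.neg_add] at this
  refine isClosed_of_closure_subset ?_
  intro x hx
  have hcont : Continuous fun y : G => add (neg x) y :=
    TopologicalGyrogroup.continuous_add.comp (continuous_const.prodMk continuous_id)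
  have hUopen : IsOpen ((fun y : G => add (neg x) y) ⁻¹' H) := hopen.preimage hcont
  have hxU : x ∈ (fun y : G => add (neg x) y) ⁻¹' H := by
    show add (neg x) x ∈ H
    rw [Gyrogroup.neg_add]; exact zero_mem
  obtain ⟨y, hyU, hyH⟩ := _root_.mem_closure_iff.mp hx _ hUopen hxU
  have hmemh : add (neg x) y ∈ H := hyU
  set k : G := add (neg x) y with hk
  have hy : y = add x k := (gy_add_neg_cancel_left x y).symm
  -- x = add y (gyr y k (neg k))
  have key : add y (gyr y k (neg k)) = x := by
    have h1 : add x (add k (neg k)) = add (add x k) (gyr x k (neg k)) := gyrassoc x k (neg k)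
    rw [Gyrogroup.add_neg, Gyrogroup.add_zero] at h1
    have h2 : gyr (add x k) k = gyr x k := loop x k
    rw [← hy] at h1 h2
    rw [h2, ← h1]
  -- gyr y k (neg k) ∈ H
  have gmem : gyr y k (neg k) ∈ H := by
    have h1 : add y (add k (neg k)) = add (add y k) (gyr y k (neg k)) := gyrassoc y k (neg k)
    rw [Gyrogroup.add_neg, Gyrogroup.add_zero] at h1
    have h2 : gyr y k (neg k) = add (neg (add y k)) y := by
      have h3 := congrArg (add (neg (add y k))) h1
      rw [gy_neg_add_cancel_left] at h3
      exact h3.symm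
    rw [h2]
    exact hH.add_mem (hH.neg_mem (hH.add_mem hyH hmemh)) hyH
  rw [← key]
  exact hH.add_mem hyH gmem
end

section
/- Let G be a topological gyrogroup and H a closed strongly L-subgyrogroup of G. Then the natural map π : G → G/H, π(a) = a⊕H, is an open continuous mapping, and the quotient space G/H is a homogeneous T1-space (homogeneous means: for any two points p, q of G/H there is a homeomorphism of G/H onto itself taking p to q). -/
universe u

namespace GyroLemmas

open Gyrogroup (gyr gyr_bijective gyr_add gyrassoc loop)

variable {G : Type u} [Gyrogroup G]

local infixl:65 " ⊹ " => Gyrogroup.add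
local prefix:100 "∼" => Gyrogroup.neg
local notation "𝟘" => Gyrogroup.zero

theorem cancel {a x y : G} (h : a ⊹ x = a ⊹ y) : x = y := by
  have hx : ∼a ⊹ (a ⊹ x) = gyr (∼a) a x := by
    rw [gyrassoc, Gyrogroup.neg_add, Gyrogroup.zero_add]
  have hy : ∼a ⊹ (a ⊹ y) = gyr (∼a) a y := by
    rw [gyrassoc, Gyrogroup.neg_add, Gyrogroup.zero_add]
  exact (gyr_bijective (∼a) a).1 (hx ▸ hy ▸ congrArg (fun t => ∼a ⊹ t) h)

theorem gyr_zero_left (b z : G) : gyr 𝟘 b z = z := by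
  have h := gyrassoc 𝟘 b z
  rw [Gyrogroup.zero_add, Gyrogroup.zero_add] at h
  exact (cancel h).symm

theorem gyr_neg_self (b z : G) : gyr (∼b) b z = z := by
  have h := congrFun (loop (∼b) b) z
  rw [Gyrogroup.neg_add, gyr_zero_left] at h
  exact h.symm

theorem gyr_self_neg (b z : G) : gyr b (∼b) z = z := by
  have h := congrFun (loop b (∼b)) z
  rw [Gyrogroup.add_neg, gyr_zero_left] at h
  exact h.symm

theorem left_cancel (a x : G) : ∼a ⊹ (a ⊹ x) = x := by
  rw [gyrassoc, Gyrogroup.neg_add, Gyrogroup.zero_add, gyr_neg_self]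

theorem left_cancel' (a x : G) : a ⊹ (∼a ⊹ x) = x := by
  rw [gyrassoc, Gyrogroup.add_neg, Gyrogroup.zero_add, gyr_self_neg]

theorem eq_neg_of_add_eq_zero {x y : G} (h : x ⊹ y = 𝟘) : y = ∼x := by
  have := left_cancel x y
  rw [h, Gyrogroup.add_zero] at this
  exact this.symm

theorem neg_neg (x : G) : ∼(∼x) = x := (eq_neg_of_add_eq_zero (Gyrogroup.neg_add x)).symm

theorem neg_injective : Function.Injective (Gyrogroup.neg : G → G) := by
  intro x y h
  rw [← neg_neg x, h, neg_neg]

theorem gyr_zero (a b : G) : gyr a b 𝟘 = 𝟘 := by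
  have h := gyrassoc a b 𝟘
  rw [Gyrogroup.add_zero] at h
  nth_rewrite 1 [← Gyrogroup.add_zero (a ⊹ b)] at h
  exact (cancel h).symm

theorem gyr_neg (a b x : G) : gyr a b (∼x) = ∼(gyr a b x) := by
  apply eq_neg_of_add_eq_zero
  rw [← gyr_add, Gyrogroup.add_neg, gyr_zero]

theorem neg_add_rev (a b : G) : ∼(a ⊹ b) = gyr a b (∼b ⊹ ∼a) := by
  refine (eq_neg_of_add_eq_zero ?_).symm
  rw [← gyrassoc, left_cancel', Gyrogroup.add_neg]

/-- (†): `gyr[b, a⊕b]` is a left inverse of `gyr[a,b]`. -/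
theorem gyr_dagger (a b z : G) : gyr b (a ⊹ b) (gyr a b z) = z := by
  have h1 : ∼a ⊹ ((a ⊹ b) ⊹ gyr a b z) = b ⊹ gyr (∼a) (a ⊹ b) (gyr a b z) := by
    rw [gyrassoc (∼a) (a ⊹ b), left_cancel]
  rw [← gyrassoc a b z, left_cancel] at h1
  have h2 : gyr (∼a) (a ⊹ b) (gyr a b z) = z := (cancel h1).symm
  have h3 := congrFun (loop (∼a) (a ⊹ b)) (gyr a b z)
  rw [left_cancel] at h3
  rw [h3, h2]

theorem gyr_dagger' (a b z : G) : gyr a b (gyr b (a ⊹ b) z) = z := by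
  obtain ⟨w, rfl⟩ := (gyr_bijective a b).2 z
  rw [gyr_dagger]

theorem rtrans_eq {x b c : G} (h : x ⊹ b = c) : x = ∼(b ⊹ gyr b c (∼c)) := by
  subst h
  have h2 : gyr b (x ⊹ b) (∼(x ⊹ b)) = ∼b ⊹ ∼x := by
    rw [neg_add_rev, gyr_dagger]
  rw [h2, left_cancel', neg_neg]

theorem rtrans_aux (b c : G) : (b ⊹ c) ⊹ gyr b c (∼c) = b := by
  rw [← gyrassoc, Gyrogroup.add_neg, Gyrogroup.add_zero]

theorem rtrans_inj {b x y : G} (h : x ⊹ b = y ⊹ b) : x = y :=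
  (rtrans_eq h).trans (rtrans_eq (rfl : y ⊹ b = y ⊹ b)).symm

theorem rtrans_surj (b c : G) : ∃ x, x ⊹ b = c := by
  refine ⟨∼(b ⊹ gyr b c (∼c)), ?_⟩
  set x := ∼(b ⊹ gyr b c (∼c)) with hx
  have e1 : x = ∼(b ⊹ gyr b (x ⊹ b) (∼(x ⊹ b))) := rtrans_eq rfl
  have e2 : b ⊹ gyr b (x ⊹ b) (∼(x ⊹ b)) = b ⊹ gyr b c (∼c) :=
    neg_injective (e1.symm.trans hx)
  have e3 : gyr b (x ⊹ b) (∼(x ⊹ b)) = gyr b c (∼c) := cancel e2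
  have e4 : (b ⊹ (x ⊹ b)) ⊹ gyr b c (∼c) = b := by rw [← e3, rtrans_aux]
  have e5 : (b ⊹ c) ⊹ gyr b c (∼c) = b := rtrans_aux b c
  exact cancel (rtrans_inj (e4.trans e5.symm))

theorem right_loop (b d z : G) : gyr b (d ⊹ b) z = gyr b d z := by
  obtain ⟨a, rfl⟩ := rtrans_surj b d
  obtain ⟨w, rfl⟩ := (gyr_bijective (a ⊹ b) b).2 z
  rw [gyr_dagger]
  have h := congrFun (loop a b) w
  rw [h, gyr_dagger]

/-- Gyration inversion: `gyr[b,a]` is inverse to `gyr[a,b]`. -/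
theorem gyr_gyr (a b z : G) : gyr b a (gyr a b z) = z := by
  rw [← right_loop b a (gyr a b z), gyr_dagger]

variable {H : Set G}

theorem zero_mem (hH : IsStronglyLSubgyrogroup H) : (𝟘 : G) ∈ H := by
  obtain ⟨a, ha⟩ := hH.nonempty
  have := hH.add_mem (hH.neg_mem ha) ha
  rwa [Gyrogroup.neg_add] at this

theorem gyr_mem (hH : IsStronglyLSubgyrogroup H) (a b : G) {h : G} (hh : h ∈ H) :
    gyr a b h ∈ H :=
  hH.gyr_image_subset a b ⟨h, hh, rfl⟩

theorem mem_lCoset_self (hH : IsStronglyLSubgyrogroup H) (x : G) : x ∈ lCoset H x :=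
  ⟨𝟘, zero_mem hH, Gyrogroup.add_zero x⟩

theorem lCoset_add (hH : IsStronglyLSubgyrogroup H) (x : G) {h : G} (hh : h ∈ H) :
    lCoset H (x ⊹ h) = lCoset H x := by
  ext y
  constructor
  · rintro ⟨h', hh', rfl⟩
    refine ⟨h ⊹ gyr h x h', hH.add_mem hh (gyr_mem hH _ _ hh'), ?_⟩
    show x ⊹ (h ⊹ gyr h x h') = (x ⊹ h) ⊹ h'
    rw [gyrassoc, gyr_gyr]
  · rintro ⟨h'', hh'', rfl⟩
    refine ⟨gyr x h (∼h ⊹ h''), gyr_mem hH _ _ (hH.add_mem (hH.neg_mem hh) hh''), ?_⟩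
    show (x ⊹ h) ⊹ gyr x h (∼h ⊹ h'') = x ⊹ h''
    rw [← gyrassoc, left_cancel']

theorem coset_rel (hH : IsStronglyLSubgyrogroup H) {x y : G} :
    lCoset H x = lCoset H y ↔ ∃ h ∈ H, y = x ⊹ h := by
  constructor
  · intro e
    have hy := mem_lCoset_self hH y
    rw [← e] at hy
    obtain ⟨h, hh, hxy⟩ := hy
    exact ⟨h, hh, hxy.symm⟩
  · rintro ⟨h, hh, rfl⟩
    exact (lCoset_add hH x hh).symm

theorem qmap_eq_iff {x y : G} : qmap H x = qmap H y ↔ lCoset H x = lCoset H y :=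
  ⟨fun h => Quotient.exact h, fun h => Quot.sound h⟩

section Top

variable [TopologicalSpace G] [TopologicalGyrogroup G]

theorem continuous_ltrans (a : G) : Continuous fun x : G => a ⊹ x :=
  TopologicalGyrogroup.continuous_add.comp (continuous_const.prodMk continuous_id)

theorem continuous_rtrans (b : G) : Continuous fun x : G => x ⊹ b :=
  TopologicalGyrogroup.continuous_add.comp (continuous_id.prodMk continuous_const)

/-- Left translation as a homeomorphism of `G`. -/
def ltransHomeo (a : G) : G ≃ₜ G where
  toFun x := a ⊹ x
  invFun x := ∼a ⊹ x
  left_inv x := left_cancel a x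
  right_inv x := left_cancel' a x
  continuous_toFun := continuous_ltrans a
  continuous_invFun := continuous_ltrans (∼a)

theorem continuous_qmap : Continuous (qmap H) := continuous_coinduced_rng

theorem qmap_resp (hH : IsStronglyLSubgyrogroup H) (g : G) :
    ∀ x y : G, lCoset H x = lCoset H y → qmap H (g ⊹ x) = qmap H (g ⊹ y) := by
  intro x y e
  obtain ⟨h, hh, rfl⟩ := (coset_rel hH).1 e
  apply Quot.sound
  show lCoset H (g ⊹ x) = lCoset H (g ⊹ (x ⊹ h))
  rw [gyrassoc]
  exact (lCoset_add hH _ (gyr_mem hH g x hh)).symm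

/-- Left translation descends to a homeomorphism of the coset space. -/
def qltransFun (hH : IsStronglyLSubgyrogroup H) (g : G) : GyroQuot H → GyroQuot H :=
  Quotient.lift (fun x => qmap H (g ⊹ x)) (qmap_resp hH g)

theorem continuous_qltransFun (hH : IsStronglyLSubgyrogroup H) (g : G) :
    Continuous (qltransFun hH g) :=
  Continuous.quotient_lift
    (by exact continuous_qmap.comp (continuous_ltrans g) :
      Continuous fun x : G => qmap H (g ⊹ x)) (qmap_resp hH g)

/-- Left translation descends to a homeomorphism of the coset space. -/
def qltrans (hH : IsStronglyLSubgyrogroup H) (g : G) : GyroQuot H ≃ₜ GyroQuot H where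
  toFun := qltransFun hH g
  invFun := qltransFun hH (∼g)
  left_inv := by
    rintro ⟨x⟩
    show qmap H (∼g ⊹ (g ⊹ x)) = qmap H x
    rw [left_cancel]
  right_inv := by
    rintro ⟨x⟩
    show qmap H (g ⊹ (∼g ⊹ x)) = qmap H x
    rw [left_cancel']
  continuous_toFun := continuous_qltransFun hH g
  continuous_invFun := continuous_qltransFun hH (∼g)

theorem main (hH : IsStronglyLSubgyrogroup H) (hcl : IsClosed H) :
    IsOpenMap (qmap H) ∧ Continuous (qmap H) ∧ T1Space (GyroQuot H) ∧
      ∀ p q : GyroQuot H, ∃ e : GyroQuot H ≃ₜ GyroQuot H, e p = q := by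
  have hquot : Topology.IsQuotientMap (qmap H) := isQuotientMap_quot_mk
  refine ⟨?_, hquot.continuous, ?_, ?_⟩
  · -- open map
    intro U hU
    rw [← hquot.isOpen_preimage]
    have hpre : qmap H ⁻¹' (qmap H '' U) = ⋃ h ∈ H, (fun x => x ⊹ h) ⁻¹' U := by
      ext x
      simp only [Set.mem_preimage, Set.mem_image, Set.mem_iUnion]
      constructor
      · rintro ⟨u, hu, he⟩
        obtain ⟨h, hh, rfl⟩ := (coset_rel hH).1 (qmap_eq_iff.1 he.symm)
        exact ⟨h, hh, hu⟩
      · rintro ⟨h, hh, hu⟩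
        exact ⟨x ⊹ h, hu, (qmap_eq_iff.2 (lCoset_add hH x hh))⟩
    rw [hpre]
    exact isOpen_biUnion fun h _ => hU.preimage (continuous_rtrans h)
  · -- T1
    refine ⟨fun p => ?_⟩
    obtain ⟨a, rfl⟩ := hquot.surjective p
    rw [← hquot.isClosed_preimage]
    have hpre : qmap H ⁻¹' {qmap H a} = lCoset H a := by
      ext x
      simp only [Set.mem_preimage, Set.mem_singleton_iff]
      rw [qmap_eq_iff]
      constructor
      · intro e
        obtain ⟨h, hh, rfl⟩ := (coset_rel hH).1 e
        exact ⟨gyr x h (∼h), gyr_mem hH _ _ (hH.neg_mem hh), rtrans_aux x h⟩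
      · rintro ⟨h, hh, rfl⟩
        exact lCoset_add hH a hh
    rw [hpre]
    exact (ltransHomeo a).isClosedMap H hcl
  · -- homogeneous
    intro p q
    obtain ⟨a, rfl⟩ := hquot.surjective p
    obtain ⟨b, rfl⟩ := hquot.surjective q
    refine ⟨(qltrans hH (∼a)).trans (qltrans hH b), ?_⟩
    have h1 : (qltrans hH (∼a)) (qmap H a) = qmap H 𝟘 := by
      show qmap H (∼a ⊹ a) = qmap H 𝟘
      rw [Gyrogroup.neg_add]
    have h2 : (qltrans hH b) (qmap H 𝟘) = qmap H b := by
      show qmap H (b ⊹ 𝟘) = qmap H b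
      rw [Gyrogroup.add_zero]
    show (qltrans hH b) ((qltrans hH (∼a)) (qmap H a)) = qmap H b
    rw [h1, h2]

end Top

end GyroLemmas

/-- For a closed strongly L-subgyrogroup `H` of a topological gyrogroup `G`,
the natural map `π : G → G/H` is open and continuous, and `G/H` is a homogeneous
`T₁`-space. -/
theorem stmt_8 {G : Type u} [Gyrogroup G] [TopologicalSpace G] [TopologicalGyrogroup G]
    (H : Set G) (hH : IsStronglyLSubgyrogroup H) (hcl : IsClosed H) :
    IsOpenMap (qmap H) ∧ Continuous (qmap H) ∧ T1Space (GyroQuot H) ∧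
      ∀ p q : GyroQuot H, ∃ e : GyroQuot H ≃ₜ GyroQuot H, e p = q :=
  GyroLemmas.main hH hcl
end

section
/- For any topological gyrogroup G and any closed strongly L-subgyrogroup H of G, the quotient space G/H is regular. -/
universe u

namespace GyroProofAux

open Gyrogroup

variable {G : Type u} [Gyrogroup G]

theorem left_cancel {a b c : G} (h : add a b = add a c) : b = c := by
  have h2 : add (neg a) (add a b) = add (neg a) (add a c) := by rw [h]
  rw [gyrassoc, gyrassoc, Gyrogroup.neg_add, Gyrogroup.zero_add, Gyrogroup.zero_add] at h2
  exact (gyr_bijective (neg a) a).1 h2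

theorem gyr_zero_left (a z : G) : gyr zero a z = z := by
  have h := gyrassoc (zero : G) a z
  rw [Gyrogroup.zero_add, Gyrogroup.zero_add] at h
  exact (left_cancel h).symm

theorem gyr_zero_right (a z : G) : gyr a zero z = z := by
  have h := gyrassoc a (zero : G) z
  rw [Gyrogroup.zero_add, Gyrogroup.add_zero] at h
  exact (left_cancel h).symm

theorem gyr_neg_add (a z : G) : gyr (neg a) a z = z := by
  have h := loop (neg a) a
  rw [Gyrogroup.neg_add] at h
  rw [← h, gyr_zero_left]

theorem gyr_add_neg (a z : G) : gyr a (neg a) z = z := by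
  have h := loop a (neg a)
  rw [Gyrogroup.add_neg] at h
  rw [← h, gyr_zero_left]

theorem neg_add_cancel_left (a b : G) : add (neg a) (add a b) = b := by
  rw [gyrassoc, Gyrogroup.neg_add, Gyrogroup.zero_add, gyr_neg_add]

theorem add_neg_cancel_left (a b : G) : add a (add (neg a) b) = b := by
  rw [gyrassoc, Gyrogroup.add_neg, Gyrogroup.zero_add, gyr_add_neg]

theorem neg_unique {a b : G} (h : add a b = zero) : b = neg a :=
  left_cancel (h.trans (Gyrogroup.add_neg a).symm)

theorem neg_neg' (a : G) : neg (neg a) = a := (neg_unique (Gyrogroup.neg_add a)).symm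

theorem neg_zero' : (neg zero : G) = zero := (neg_unique (Gyrogroup.zero_add zero)).symm

theorem gyr_zero (a b : G) : gyr a b zero = zero := by
  have h := gyr_add a b zero zero
  rw [Gyrogroup.zero_add] at h
  have h2 : add (gyr a b zero) zero = add (gyr a b zero) (gyr a b zero) := by
    rw [Gyrogroup.add_zero]; exact h
  exact (left_cancel h2).symm

theorem gyr_neg' (a b z : G) : gyr a b (neg z) = neg (gyr a b z) := by
  apply neg_unique
  rw [← gyr_add, Gyrogroup.add_neg, gyr_zero]

theorem gyr_gyr_cancel (a b z : G) : gyr (neg a) (add a b) (gyr a b z) = z := by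
  have h : add b z = add b (gyr (neg a) (add a b) (gyr a b z)) := by
    calc add b z = add (neg a) (add a (add b z)) := (neg_add_cancel_left _ _).symm
    _ = add (neg a) (add (add a b) (gyr a b z)) := by rw [gyrassoc a b z]
    _ = add (add (neg a) (add a b)) (gyr (neg a) (add a b) (gyr a b z)) := gyrassoc _ _ _
    _ = add b (gyr (neg a) (add a b) (gyr a b z)) := by rw [neg_add_cancel_left]
  exact (left_cancel h).symm

theorem gyr_cancel_gyr (a b z : G) : gyr a b (gyr (neg a) (add a b) z) = z := by
  have h := gyr_gyr_cancel (neg a) (add a b) z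
  rwa [neg_neg', neg_add_cancel_left] at h

theorem gyr_cancel_right (c d : G) : add (add c d) (gyr c d (neg d)) = c := by
  rw [← gyrassoc, Gyrogroup.add_neg, Gyrogroup.add_zero]

/-- The key formula: `gyr[b,y](⊖y) = ⊖(b⊕y)⊕b`. -/
theorem gyr_neg_formula (b y : G) : gyr b y (neg y) = add (neg (add b y)) b := by
  have h := gyr_cancel_right b y
  have h2 := neg_add_cancel_left (add b y) (gyr b y (neg y))
  rw [h] at h2
  exact h2.symm

/-- σ_y ∘ ρ_y = id : `σ_y(x⊕y) = x` where `σ_y(b) = b ⊕ (⊖(b⊕y)⊕b)`. -/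
theorem sigma_rho (x y : G) :
    add (add x y) (add (neg (add (add x y) y)) (add x y)) = x := by
  rw [← gyr_neg_formula (add x y) y]
  have hl : gyr (add x y) y (neg y) = gyr x y (neg y) := by rw [loop]
  rw [hl, ← gyrassoc, Gyrogroup.add_neg, Gyrogroup.add_zero]

/-- ρ_y ∘ σ_y = id : every `b` is of the form `x ⊕ y`, explicitly. -/
theorem rho_sigma (b y : G) : add (add b (add (neg (add b y)) b)) y = b := by
  set c := add b y with hc
  set u := add (neg c) b with hu
  have hcu : add c u = b := add_neg_cancel_left c b
  have h1 : add (add b u) (gyr b u (neg u)) = b := gyr_cancel_right b u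
  have h2 : gyr b u (neg u) = gyr c u (neg u) := by
    conv_lhs => rw [← hcu]
    rw [loop]
  have h : add (add c u) (gyr c u (neg u)) = c := gyr_cancel_right c u
  have h4 := neg_add_cancel_left (add c u) (gyr c u (neg u))
  rw [h] at h4
  -- h4 : add (neg (add c u)) c = gyr c u (neg u)
  have h5 : gyr c u (neg u) = y := by
    rw [← h4, hcu, hc, neg_add_cancel_left]
  rw [h2, h5] at h1
  exact h1

end GyroProofAux

namespace GyroProofAux

open Gyrogroup

variable {G : Type u} [Gyrogroup G] {H : Set G}

theorem zero_mem (hH : IsStronglyLSubgyrogroup H) : (zero : G) ∈ H := by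
  obtain ⟨h, hh⟩ := hH.nonempty
  have := hH.add_mem (hH.neg_mem hh) hh
  rwa [Gyrogroup.neg_add] at this

theorem gyr_image_eq (hH : IsStronglyLSubgyrogroup H) (a b : G) : gyr a b '' H = H := by
  refine Set.Subset.antisymm (hH.gyr_image_subset a b) (fun h hh => ?_)
  exact ⟨gyr (neg a) (add a b) h,
    hH.gyr_image_subset _ _ ⟨h, hh, rfl⟩, gyr_cancel_gyr a b h⟩

theorem lCoset_add (hH : IsStronglyLSubgyrogroup H) (a b : G) :
    lCoset H (add a b) = (fun z => add a z) '' lCoset H b := by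
  calc lCoset H (add a b) = (fun z => add (add a b) z) '' H := rfl
  _ = (fun z => add (add a b) z) '' (gyr a b '' H) := by rw [gyr_image_eq hH]
  _ = (fun h => add (add a b) (gyr a b h)) '' H := Set.image_image _ _ _
  _ = (fun h => add a (add b h)) '' H := by
        apply Set.image_congr'
        intro h
        exact (gyrassoc a b h).symm
  _ = (fun z => add a z) '' ((fun h => add b h) '' H) := (Set.image_image _ _ _).symm

theorem lCoset_self_of_mem (hH : IsStronglyLSubgyrogroup H) {h : G} (hh : h ∈ H) :
    lCoset H h = H := by
  apply Set.Subset.antisymm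
  · rintro _ ⟨k, hk, rfl⟩
    exact hH.add_mem hh hk
  · intro k hk
    exact ⟨add (neg h) k, hH.add_mem (hH.neg_mem hh) hk, add_neg_cancel_left h k⟩

theorem lCoset_add_mem (hH : IsStronglyLSubgyrogroup H) {h : G} (hh : h ∈ H) (a : G) :
    lCoset H (add a h) = lCoset H a := by
  rw [lCoset_add hH a h, lCoset_self_of_mem hH hh]
  rfl

theorem self_mem_lCoset (hH : IsStronglyLSubgyrogroup H) (a : G) : a ∈ lCoset H a :=
  ⟨zero, zero_mem hH, Gyrogroup.add_zero a⟩

variable [TopologicalSpace G] [TopologicalGyrogroup G]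

theorem cont_add₂ {α : Type u} [TopologicalSpace α] {f g : α → G}
    (hf : Continuous f) (hg : Continuous g) : Continuous fun x => add (f x) (g x) :=
  TopologicalGyrogroup.continuous_add.comp (hf.prodMk hg)

theorem cont_neg₁ {α : Type u} [TopologicalSpace α] {f : α → G}
    (hf : Continuous f) : Continuous fun x => neg (f x) :=
  TopologicalGyrogroup.continuous_neg.comp hf

/-- The image of a right translation equals a preimage under the continuous "inverse". -/
theorem rho_image (y : G) (K : Set G) :
    (fun k => add k y) '' K = (fun b => add b (add (neg (add b y)) b)) ⁻¹' K := by
  ext b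
  constructor
  · rintro ⟨k, hk, rfl⟩
    show add (add k y) (add (neg (add (add k y) y)) (add k y)) ∈ K
    rwa [sigma_rho k y]
  · intro hb
    exact ⟨add b (add (neg (add b y)) b), hb, rho_sigma b y⟩

theorem rho_open (y : G) {K : Set G} (hK : IsOpen K) : IsOpen ((fun k => add k y) '' K) := by
  rw [rho_image]
  exact hK.preimage (cont_add₂ continuous_id
    (cont_add₂ (cont_neg₁ (cont_add₂ continuous_id continuous_const)) continuous_id))

theorem lam_image (x : G) (W : Set G) :
    (fun w => add x w) '' W = (fun y => add (neg x) y) ⁻¹' W := by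
  ext b
  constructor
  · rintro ⟨w, hw, rfl⟩
    show add (neg x) (add x w) ∈ W
    rwa [neg_add_cancel_left]
  · intro hb
    exact ⟨add (neg x) b, hb, add_neg_cancel_left x b⟩

theorem continuous_qmap : Continuous (qmap H) := continuous_coinduced_rng

theorem isOpen_qmap_iff {U : Set (GyroQuot H)} : IsOpen U ↔ IsOpen (qmap H ⁻¹' U) :=
  isOpen_coinduced

theorem preimage_image_qmap (hH : IsStronglyLSubgyrogroup H) (S : Set G) :
    qmap H ⁻¹' (qmap H '' S) = ⋃ h ∈ H, (fun y => add y h) ⁻¹' S := by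
  ext y
  simp only [Set.mem_preimage, Set.mem_image, Set.mem_iUnion]
  constructor
  · rintro ⟨v, hvS, hv⟩
    have hrel : lCoset H v = lCoset H y := Quotient.exact hv
    have : v ∈ lCoset H y := hrel ▸ self_mem_lCoset hH v
    obtain ⟨h, hh, hvy⟩ := this
    have hvy' : add y h = v := hvy
    exact ⟨h, hh, by rwa [hvy']⟩
  · rintro ⟨h, hh, hS⟩
    exact ⟨add y h, hS, Quotient.sound (lCoset_add_mem hH hh y)⟩

theorem isOpenMap_qmap (hH : IsStronglyLSubgyrogroup H) : IsOpenMap (qmap H) := by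
  intro U hU
  rw [isOpen_qmap_iff, preimage_image_qmap hH]
  exact isOpen_biUnion fun h _ =>
    hU.preimage (cont_add₂ continuous_id continuous_const)

end GyroProofAux

open Gyrogroup GyroProofAux in
/-- For any topological gyrogroup `G` and any closed strongly
L-subgyrogroup `H`, the quotient space `G/H` is regular. -/
theorem stmt_10 {G : Type u} [Gyrogroup G] [TopologicalSpace G] [TopologicalGyrogroup G]
    (H : Set G) (hH : IsStronglyLSubgyrogroup H) (hcl : IsClosed H) :
    RegularSpace (GyroQuot H) := by
  apply RegularSpace.of_exists_mem_nhds_isClosed_subset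
  intro q s hs
  obtain ⟨O, hOs, hOopen, hqO⟩ := mem_nhds_iff.mp hs
  obtain ⟨x, rfl⟩ := Quot.exists_rep q
  have hPopen : IsOpen (qmap H ⁻¹' O) := hOopen.preimage continuous_qmap
  have hxP : x ∈ qmap H ⁻¹' O := hqO
  -- choose neighborhoods K, W of 0 with K ⊕ (x ⊕ W) ⊆ π⁻¹(O)
  have hFc : Continuous fun p : G × G => add p.1 (add x p.2) :=
    cont_add₂ continuous_fst (cont_add₂ continuous_const continuous_snd)
  have hFopen : IsOpen ((fun p : G × G => add p.1 (add x p.2)) ⁻¹' (qmap H ⁻¹' O)) :=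
    hPopen.preimage hFc
  have hmem00 : ((zero : G), (zero : G)) ∈
      (fun p : G × G => add p.1 (add x p.2)) ⁻¹' (qmap H ⁻¹' O) := by
    show add zero (add x zero) ∈ qmap H ⁻¹' O
    rwa [Gyrogroup.add_zero, Gyrogroup.zero_add]
  obtain ⟨K, W, hKopen, hWopen, hK0, hW0, hKW⟩ := isOpen_prod_iff.mp hFopen zero zero hmem00
  -- Ω := π(x ⊕ W) is an open neighborhood of π(x)
  have hxWopen : IsOpen ((fun w => add x w) '' W) := by
    rw [lam_image]
    exact hWopen.preimage (cont_add₂ continuous_const continuous_id)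
  have hΩopen : IsOpen (qmap H '' ((fun w => add x w) '' W)) := isOpenMap_qmap hH _ hxWopen
  have hqΩ : qmap H x ∈ qmap H '' ((fun w => add x w) '' W) :=
    ⟨add x zero, ⟨zero, hW0, rfl⟩, by rw [Gyrogroup.add_zero]⟩
  refine ⟨closure (qmap H '' ((fun w => add x w) '' W)),
    Filter.mem_of_superset (hΩopen.mem_nhds hqΩ) subset_closure, isClosed_closure, ?_⟩
  intro q' hq'
  apply hOs
  obtain ⟨y, rfl⟩ := Quot.exists_rep q'
  -- the open neighborhood π((⊖⁻¹K) ⊕ y) of π(y) must meet Ω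
  have hK'open : IsOpen ((fun k : G => neg k) ⁻¹' K) := hKopen.preimage (cont_neg₁ continuous_id)
  have hNopen : IsOpen ((fun k => add k y) '' ((fun k : G => neg k) ⁻¹' K)) :=
    rho_open y hK'open
  have hπNopen : IsOpen (qmap H '' ((fun k => add k y) '' ((fun k : G => neg k) ⁻¹' K))) :=
    isOpenMap_qmap hH _ hNopen
  have hyN : qmap H y ∈ qmap H '' ((fun k => add k y) '' ((fun k : G => neg k) ⁻¹' K)) := by
    refine ⟨add zero y, ⟨zero, ?_, rfl⟩, by rw [Gyrogroup.zero_add]⟩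
    show neg (zero : G) ∈ K
    rwa [neg_zero']
  obtain ⟨p, hp1, hp2⟩ := (mem_closure_iff.mp hq') _ hπNopen hyN
  obtain ⟨n, ⟨k, hkK, rfl⟩, hpn⟩ := hp1
  obtain ⟨m, ⟨w, hwW, rfl⟩, hpm⟩ := hp2
  -- p = π(k ⊕ y) = π(x ⊕ w), hence π(y) = π(⊖k ⊕ (x ⊕ w)) ∈ O
  have hrel : lCoset H (add k y) = lCoset H (add x w) := Quotient.exact (hpn.trans hpm.symm)
  have hyrel : lCoset H y = lCoset H (add (neg k) (add x w)) := by
    calc lCoset H y = lCoset H (add (neg k) (add k y)) := by rw [GyroProofAux.neg_add_cancel_left]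
    _ = (fun z => add (neg k) z) '' lCoset H (add k y) := lCoset_add hH _ _
    _ = (fun z => add (neg k) z) '' lCoset H (add x w) := by rw [hrel]
    _ = lCoset H (add (neg k) (add x w)) := (lCoset_add hH _ _).symm
  have hq : qmap H y = qmap H (add (neg k) (add x w)) := Quotient.sound hyrel
  have hz : add (neg k) (add x w) ∈ qmap H ⁻¹' O := hKW (show ((neg k : G), w) ∈ K ×ˢ W from ⟨hkK, hwW⟩)
  show qmap H y ∈ O
  rw [hq]
  exact hz
end

section
/- Let G be a topological gyrogroup, H a closed strongly L-subgyrogroup of G, π : G → G/H the natural quotient mapping, and a ∈ G. Let λ_a : G → G be the left translation λ_a(x) = a⊕x, and let h_a : G/H → G/H be defined by h_a(x⊕H) = a⊕(x⊕H) = (a⊕x)⊕H. Then h_a is a homeomorphism of G/H onto itself, and π ∘ λ_a = h_a ∘ π. -/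
universe u

/-!
Left translation by `a` descends to `G/H` because `(a ⊕ x) ⊕ H = a ⊕ (x ⊕ H)`.
Gyroassociativity gives this with `gyr[a,x](H)` in place of `H`, and for a strongly
`L`-subgyrogroup `gyr[a,x](H) = H`, since `gyr[⊖a, a ⊕ x]` inverts `gyr[a,x]` and also maps `H`
into `H`. Translation by `⊖a` descends to the inverse map, and both are continuous, being
induced by continuous maps of `G`.
-/

namespace Gyrogroup

variable {G : Type u} [Gyrogroup G]

theorem add_right_injective (a : G) : Function.Injective (add a) := by
  intro u v h
  have h' : add (neg a) (add a u) = add (neg a) (add a v) := congrArg _ h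
  rw [gyrassoc, gyrassoc, neg_add, zero_add, zero_add] at h'
  exact (gyr_bijective (neg a) a).1 h'

theorem gyr_zero_left (b z : G) : gyr zero b z = z := by
  have h := gyrassoc zero b z
  rw [zero_add, zero_add] at h
  exact add_right_injective b h.symm

theorem gyr_neg_self (b z : G) : gyr (neg b) b z = z := by
  rw [← loop, neg_add, gyr_zero_left]

theorem gyr_self_neg (b z : G) : gyr b (neg b) z = z := by
  rw [← loop, add_neg, gyr_zero_left]

theorem neg_add_cancel_left (a z : G) : add (neg a) (add a z) = z := by
  rw [gyrassoc, neg_add, zero_add, gyr_neg_self]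

theorem add_neg_cancel_left (a z : G) : add a (add (neg a) z) = z := by
  rw [gyrassoc, add_neg, zero_add, gyr_self_neg]

/-- Cancel `a ⊕ b` on the left: for `w = gyr[⊖a, a ⊕ b] z` we have
`(a ⊕ b) ⊕ gyr[a,b] w = a ⊕ (b ⊕ w)` and `b ⊕ w = ⊖a ⊕ ((a ⊕ b) ⊕ z)`. -/
theorem gyr_gyr_neg_add (a b z : G) : gyr a b (gyr (neg a) (add a b) z) = z := by
  apply add_right_injective (add a b)
  have h : add b (gyr (neg a) (add a b) z) = add (neg a) (add (add a b) z) := by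
    rw [gyrassoc (neg a) (add a b) z, neg_add_cancel_left]
  rw [← gyrassoc, h, add_neg_cancel_left]

theorem continuous_add_left [TopologicalSpace G] [TopologicalGyrogroup G] (a : G) :
    Continuous (add a) :=
  TopologicalGyrogroup.continuous_add.comp (continuous_const.prodMk continuous_id)

end Gyrogroup

open Gyrogroup

namespace IsStronglyLSubgyrogroup

variable {G : Type u} [Gyrogroup G] {H : Set G}

theorem image_gyr_eq (hH : IsStronglyLSubgyrogroup H) (a b : G) : gyr a b '' H = H := by
  refine (hH.gyr_image_subset a b).antisymm fun h hh => ?_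
  exact ⟨gyr (neg a) (add a b) h, hH.gyr_image_subset _ _ ⟨h, hh, rfl⟩, gyr_gyr_neg_add a b h⟩

theorem lCoset_add (hH : IsStronglyLSubgyrogroup H) (c x : G) :
    lCoset H (add c x) = add c '' lCoset H x := by
  calc lCoset H (add c x)
      = (fun h => add (add c x) (gyr c x h)) '' H := by
        rw [← Set.image_image, hH.image_gyr_eq]; rfl
    _ = (fun h => add c (add x h)) '' H := Set.image_congr fun h _ => (gyrassoc c x h).symm
    _ = add c '' lCoset H x := (Set.image_image _ _ _).symm

theorem lCoset_add_congr (hH : IsStronglyLSubgyrogroup H) (c : G) :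
    Relator.LiftFun (cosetSetoid H).r (cosetSetoid H).r (add c) (add c) := fun x y hxy => by
  change lCoset H (add c x) = lCoset H (add c y)
  rw [hH.lCoset_add, hH.lCoset_add]
  exact congrArg _ hxy

end IsStronglyLSubgyrogroup

namespace GyroQuot

variable {G : Type u} [Gyrogroup G] {H : Set G}

def leftTranslate (hH : IsStronglyLSubgyrogroup H) (a : G) : GyroQuot H → GyroQuot H :=
  Quotient.map' (add a) (hH.lCoset_add_congr a)

theorem leftTranslate_qmap (hH : IsStronglyLSubgyrogroup H) (a x : G) :
    leftTranslate hH a (qmap H x) = qmap H (add a x) :=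
  rfl

variable [TopologicalSpace G] [TopologicalGyrogroup G]

def leftTranslateHomeomorph (hH : IsStronglyLSubgyrogroup H) (a : G) :
    GyroQuot H ≃ₜ GyroQuot H where
  toFun := leftTranslate hH a
  invFun := leftTranslate hH (neg a)
  left_inv := Quotient.ind fun x => congrArg (qmap H) (neg_add_cancel_left a x)
  right_inv := Quotient.ind fun x => congrArg (qmap H) (add_neg_cancel_left a x)
  continuous_toFun := (continuous_add_left a).quotient_map' _
  continuous_invFun := (continuous_add_left (neg a)).quotient_map' _

end GyroQuot

theorem stmt_11_general {G : Type u} [Gyrogroup G] [TopologicalSpace G] [TopologicalGyrogroup G]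
    (H : Set G) (hH : IsStronglyLSubgyrogroup H) (a : G) :
    ∃ e : GyroQuot H ≃ₜ GyroQuot H, ∀ x : G, e (qmap H x) = qmap H (Gyrogroup.add a x) :=
  ⟨GyroQuot.leftTranslateHomeomorph hH a, GyroQuot.leftTranslate_qmap hH a⟩

/-- For a closed strongly L-subgyrogroup `H` and `a ∈ G`, the left
translation `h_a : G/H → G/H`, `x ⊕ H ↦ (a ⊕ x) ⊕ H`, is a homeomorphism of `G/H`
satisfying `π ∘ λ_a = h_a ∘ π`. -/
theorem stmt_11 {G : Type u} [Gyrogroup G] [TopologicalSpace G] [TopologicalGyrogroup G]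
    (H : Set G) (hH : IsStronglyLSubgyrogroup H) (hcl : IsClosed H) (a : G) :
    ∃ e : GyroQuot H ≃ₜ GyroQuot H, ∀ x : G, e (qmap H x) = qmap H (Gyrogroup.add a x) :=
  stmt_11_general H hH a
end
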